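/- arXiv:2409.07941 — 2 statements merged into one kernel-verified Lean document; each statement's English description precedes it below -/
import Mathlib

section
/- Let K be a real quadratic field and let G(z₁,…,z_r) = G₀(z₁, τ(z₁), …, z_r, τ(z_r)) be a totally positive definite integral generalized quadratic form in r variables over K. If G is universal, then G has a universal quadratic subform; more precisely, if z₁,…,z_ℓ are the non-proper variables of G and z_{ℓ+1},…,z_r the proper ones, then the quadratic form Q̃(z₁,…,z_ℓ) := G(z₁,…,z_ℓ, 0,…,0), obtained by setting all proper variables of G to zero, is universal. -/
/-!
Total positive definiteness gives `c > 0` with `c · φ₁(x_p)² ≤ φ₁(G₀ x)` for every coordinate `p`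
appearing in `G` (a positive definite real form dominates `c‖x‖²`). A nonzero algebraic integer
`β` has `|φ₁ β| · |φ₂ β| = |N(β)| ≥ 1`, and `φ₁ ∘ τ = φ₂`, so a nonzero proper variable `zᵢ`
makes one of `φ₁(zᵢ)²`, `φ₁(τ zᵢ)²` at least `1`, hence `φ₁(G(z)) ≥ c`. By Dirichlet's unit
theorem there is a unit `v` with `φ₁(α v²) < c`; every representation of `α v²` then has its
proper variables equal to zero, and dividing each remaining variable by `v` (or by a conjugate of
`v` when only its conjugate coordinate appears) gives a representation of `α` by the subform.
-/

open NumberField Matrix Filter Topology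

theorem RingHom.map_dotProduct_mulVec {R S ι : Type*} [CommSemiring R] [CommSemiring S] [Fintype ι]
    (f : R →+* S) (M : Matrix ι ι R) (v w : ι → R) :
    f (v ⬝ᵥ M *ᵥ w) = (f ∘ v) ⬝ᵥ M.map f *ᵥ (f ∘ w) := by
  rw [RingHom.map_dotProduct]
  exact congrArg _ (funext (RingHom.map_mulVec f M w))

theorem exists_pos_mul_norm_sq_le {E : Type*} [NormedAddCommGroup E] [NormedSpace ℝ E]
    [FiniteDimensional ℝ E] {f : E → ℝ} (hf : Continuous f)
    (hsmul : ∀ (a : ℝ) (t : E), f (a • t) = a ^ 2 * f t) (hpos : ∀ t, t ≠ 0 → 0 < f t) :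
    ∃ c > 0, ∀ t, c * ‖t‖ ^ 2 ≤ f t := by
  have hf0 : f 0 = 0 := by simpa using hsmul 0 0
  rcases subsingleton_or_nontrivial E with hE | hE
  · exact ⟨1, one_pos, fun t => by simp [Subsingleton.elim t 0, hf0]⟩
  obtain ⟨t₀, ht₀, hmin⟩ := (isCompact_sphere (0 : E) 1).exists_isMinOn
    (NormedSpace.sphere_nonempty.mpr zero_le_one) hf.continuousOn
  refine ⟨f t₀, hpos t₀ (ne_zero_of_mem_unit_sphere ⟨t₀, ht₀⟩), fun t => ?_⟩
  rcases eq_or_ne t 0 with rfl | ht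
  · simp [hf0]
  have hnorm : ‖t‖ ≠ 0 := norm_ne_zero_iff.mpr ht
  have hunit : ‖t‖⁻¹ • t ∈ Metric.sphere (0 : E) 1 := by
    simp [norm_smul, hnorm]
  calc f t₀ * ‖t‖ ^ 2 ≤ f (‖t‖⁻¹ • t) * ‖t‖ ^ 2 := by gcongr; exact hmin hunit
    _ = f t := by rw [hsmul]; field_simp

theorem Matrix.posDef_map_of_pos {K ι : Type*} [Field K] [Fintype ι] [DecidableEq ι]
    (φ : K →+* ℝ) {M : Matrix ι ι K} (hM : M.IsSymm)
    (hpos : ∀ x : ι → K, x ≠ 0 → 0 < φ (x ⬝ᵥ M *ᵥ x)) : (M.map φ).PosDef := by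
  have hherm : (M.map φ).IsHermitian := by
    rw [isHermitian_iff_isSymm]; exact hM.map φ
  -- Nonnegativity passes from the rational points to all real points by density.
  have hpsd : (M.map φ).PosSemidef := by
    refine .of_dotProduct_mulVec_nonneg hherm fun t => ?_
    rw [star_trivial]
    refine (DenseRange.piMap fun _ => Rat.denseRange_cast).induction_on t
      (isClosed_le continuous_const (by fun_prop)) fun q => ?_
    have hq : Pi.map (fun _ => ((↑) : ℚ → ℝ)) q = φ ∘ fun p => (q p : K) := by
      ext p; simp
    rw [hq, ← RingHom.map_dotProduct_mulVec]
    rcases eq_or_ne (fun p => (q p : K)) 0 with hq0 | hq0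
    · simp [hq0]
    · exact (hpos _ hq0).le
  rw [hpsd.posDef_iff_det_ne_zero, ← RingHom.mapMatrix_apply, ← RingHom.map_det,
    map_ne_zero]
  intro hdet
  obtain ⟨v, hv, hMv⟩ := Matrix.exists_mulVec_eq_zero_iff.mpr hdet
  simpa [hMv] using hpos v hv

theorem QuadraticForm.apply_eq_dotProduct_toMatrix'_mulVec {K ι : Type*} [CommRing K]
    [Fintype ι] [DecidableEq ι] [Invertible (2 : K)] (Q : QuadraticForm K (ι → K)) (x : ι → K) :
    Q x = x ⬝ᵥ Q.toMatrix' *ᵥ x := by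
  rw [QuadraticForm.toMatrix', ← Matrix.toLinearMap₂'_apply', Matrix.toLinearMap₂'_toMatrix']
  exact (QuadraticMap.associated_eq_self_apply K Q x).symm

theorem QuadraticForm.exists_pos_mul_sq_le_of_pos {K ι : Type*} [Field K] [Fintype ι]
    (φ : K →+* ℝ) (Q : QuadraticForm K (ι → K)) (hQ : ∀ x, x ≠ 0 → 0 < φ (Q x)) :
    ∃ c > 0, ∀ x p, c * φ (x p) ^ 2 ≤ φ (Q x) := by
  classical
  have := φ.charZero
  have : Invertible (2 : K) := invertibleOfNonzero two_ne_zero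
  have hQA : ∀ x, φ (Q x) = (φ ∘ x) ⬝ᵥ Q.toMatrix'.map φ *ᵥ (φ ∘ x) := fun x => by
    rw [apply_eq_dotProduct_toMatrix'_mulVec, RingHom.map_dotProduct_mulVec]
  have hA : (Q.toMatrix'.map φ).PosDef := posDef_map_of_pos φ Q.isSymm_toMatrix' fun x hx => by
    simpa [← apply_eq_dotProduct_toMatrix'_mulVec] using hQ x hx
  obtain ⟨c, hc, hbound⟩ := exists_pos_mul_norm_sq_le
    (f := fun t => t ⬝ᵥ Q.toMatrix'.map φ *ᵥ t) (by fun_prop)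
    (fun a t => by simp only [mulVec_smul, smul_dotProduct, dotProduct_smul, smul_eq_mul]; ring)
    (fun t ht => hA.dotProduct_mulVec_pos ht)
  refine ⟨c, hc, fun x p => ?_⟩
  calc c * φ (x p) ^ 2 ≤ c * ‖φ ∘ x‖ ^ 2 := by
        gcongr c * ?_
        rw [sq_le_sq, abs_norm]
        exact norm_le_pi_norm (φ ∘ x) p
    _ ≤ φ (Q x) := by rw [hQA]; exact hbound _

theorem QuadraticForm.exists_pos_mul_sq_le_of_forall_mem_eq {K ι : Type*} [Field K] [Fintype ι]
    (φ : K →+* ℝ) (Q : QuadraticForm K (ι → K)) (S : Set ι)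
    (hS : ∀ x y : ι → K, (∀ p ∈ S, x p = y p) → Q x = Q y)
    (hQ : ∀ x : ι → K, (∀ p ∉ S, x p = 0) → x ≠ 0 → 0 < φ (Q x)) :
    ∃ c > 0, ∀ x, ∀ p ∈ S, c * φ (x p) ^ 2 ≤ φ (Q x) := by
  classical
  let L : (S → K) →ₗ[K] ι → K :=
    LinearMap.pi fun p => if h : p ∈ S then LinearMap.proj ⟨p, h⟩ else 0
  have hL : ∀ y p, L y p = if h : p ∈ S then y ⟨p, h⟩ else 0 := fun y p => by
    simp only [L, LinearMap.pi_apply]; split_ifs <;> rfl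
  obtain ⟨c, hc, hbound⟩ := exists_pos_mul_sq_le_of_pos φ (Q.comp L) fun y hy =>
    hQ _ (fun p hp => by simp [hL, hp])
      (fun h => hy (funext fun q => by simpa [hL] using congrFun h q))
  refine ⟨c, hc, fun x p hp => ?_⟩
  have hx : Q x = Q.comp L (fun q : S => x q) := hS _ _ fun q hq => by simp [hL, hq]
  simpa [hx] using hbound (fun q : S => x q) ⟨p, hp⟩

theorem ofRealHom_comp_ne {K : Type*} [NonAssocSemiring K] {φ₁ φ₂ : K →+* ℝ} (hφ : φ₁ ≠ φ₂) :
    Complex.ofRealHom.comp φ₁ ≠ Complex.ofRealHom.comp φ₂ :=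
  (RingHom.cancel_left Complex.ofReal_injective).not.mpr hφ

section RealQuadratic

variable {K : Type*} [Field K] [NumberField K] {φ₁ φ₂ : K →+* ℝ}

theorem eq_or_eq_of_finrank_eq_two (hdeg : Module.finrank ℚ K = 2) (hφ : φ₁ ≠ φ₂)
    (σ : K →+* ℂ) : σ = Complex.ofRealHom.comp φ₁ ∨ σ = Complex.ofRealHom.comp φ₂ := by
  classical
  have huniv : Finset.univ = {Complex.ofRealHom.comp φ₁, Complex.ofRealHom.comp φ₂} :=
    (Finset.eq_of_subset_of_card_le (Finset.subset_univ _) (by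
      rw [Finset.card_univ, Embeddings.card, hdeg, Finset.card_pair (ofRealHom_comp_ne hφ)])).symm
  simpa [huniv] using Finset.mem_univ σ

theorem apply_algEquiv_eq_of_ne_refl (hdeg : Module.finrank ℚ K = 2) (hφ : φ₁ ≠ φ₂)
    {τ : K ≃ₐ[ℚ] K} (hτ : τ ≠ AlgEquiv.refl) (x : K) : φ₁ (τ x) = φ₂ x := by
  rcases eq_or_eq_of_finrank_eq_two hdeg hφ (Complex.ofRealHom.comp (φ₁.comp (τ : K →+* K)))
    with h | h <;> rw [RingHom.cancel_left Complex.ofReal_injective] at h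
  · exact absurd (AlgEquiv.ext fun y => φ₁.injective (DFunLike.congr_fun h y)) hτ
  · exact DFunLike.congr_fun h x

theorem one_le_abs_mul_abs (hdeg : Module.finrank ℚ K = 2) (hφ : φ₁ ≠ φ₂) {β : 𝓞 K}
    (hβ : β ≠ 0) : 1 ≤ |φ₁ β| * |φ₂ β| := by
  classical
  have huniv : Finset.univ = {Complex.ofRealHom.comp φ₁, Complex.ofRealHom.comp φ₂} :=
    Finset.eq_univ_of_forall (fun σ => by simpa using eq_or_eq_of_finrank_eq_two hdeg hφ σ) |>.symm
  have hnorm : ((Algebra.norm ℤ β : ℚ) : ℂ) = φ₁ β * φ₂ β := by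
    rw [Algebra.coe_norm_int, ← eq_ratCast (algebraMap ℚ ℂ),
      Algebra.norm_eq_prod_embeddings ℚ ℂ,
      ← (RingHom.equivRatAlgHom (R := K) (S := ℂ)).prod_comp,
      huniv, Finset.prod_pair (ofRealHom_comp_ne hφ)]
    rfl
  calc (1 : ℝ) ≤ |(Algebra.norm ℤ β : ℝ)| := by
        exact_mod_cast Int.one_le_abs (Algebra.norm_ne_zero_iff.mpr hβ)
    _ = |φ₁ β| * |φ₂ β| := by
        have := congrArg norm hnorm
        simpa [Complex.norm_real] using this

theorem exists_unit_abs_lt_one (hφ : φ₁ ≠ φ₂) : ∃ u : (𝓞 K)ˣ, |φ₁ u| < 1 := by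
  have hplace : ∀ (φ : K →+* ℝ) (x : K), InfinitePlace.mk (Complex.ofRealHom.comp φ) x = |φ x| :=
    fun φ x => by simp [InfinitePlace.apply, Complex.norm_real]
  have hreal : ComplexEmbedding.IsReal (Complex.ofRealHom.comp φ₁) :=
    ComplexEmbedding.isReal_iff.mpr (RingHom.ext fun x => by simp)
  have hne : InfinitePlace.mk (Complex.ofRealHom.comp φ₁) ≠
      InfinitePlace.mk (Complex.ofRealHom.comp φ₂) := by
    rw [Ne, InfinitePlace.mk_eq_iff, ComplexEmbedding.isReal_iff.mp hreal, or_self]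
    exact ofRealHom_comp_ne hφ
  obtain ⟨u, hu⟩ := Units.dirichletUnitTheorem.exists_unit K
    (InfinitePlace.mk (Complex.ofRealHom.comp φ₂))
  refine ⟨u, ?_⟩
  rw [← hplace]
  exact (Real.log_neg_iff (InfinitePlace.pos_iff.mpr (by simp))).mp (hu _ hne)

theorem exists_unit_mul_sq_lt (hφ : φ₁ ≠ φ₂) (a : ℝ) {c : ℝ} (hc : 0 < c) :
    ∃ v : (𝓞 K)ˣ, a * φ₁ v ^ 2 < c := by
  obtain ⟨u, hu⟩ := exists_unit_abs_lt_one hφ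
  have hlim : Tendsto (fun n : ℕ => a * (φ₁ u ^ 2) ^ n) atTop (𝓝 (a * 0)) :=
    (tendsto_pow_atTop_nhds_zero_of_abs_lt_one (by
      rw [abs_pow]; exact pow_lt_one₀ (abs_nonneg _) hu two_ne_zero)).const_mul a
  obtain ⟨n, hn⟩ := (hlim.eventually (gt_mem_nhds (by simpa using hc))).exists
  exact ⟨u ^ n, by simpa [← pow_mul, mul_comm] using hn⟩

end RealQuadratic

section GeneralizedForm

variable {K ι : Type*} [Field K] [NumberField K]

def conjPair (τ : K ≃ₐ[ℚ] K) (z : ι → 𝓞 K) : ι × Bool → K :=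
  fun p => if p.2 then τ (z p.1 : K) else (z p.1 : K)

def IsProperVar (S : Set (ι × Bool)) (i : ι) : Prop :=
  (i, false) ∈ S ∧ (i, true) ∈ S

theorem eq_zero_of_isProperVar_of_lt {φ₁ φ₂ : K →+* ℝ} (hdeg : Module.finrank ℚ K = 2)
    (hφ : φ₁ ≠ φ₂) {τ : K ≃ₐ[ℚ] K} (hτ : ∀ x, φ₁ (τ x) = φ₂ x) {F : (ι × Bool → K) → K}
    {S : Set (ι × Bool)} {c : ℝ} (hc : 0 < c)
    (hbound : ∀ x, ∀ p ∈ S, c * φ₁ (x p) ^ 2 ≤ φ₁ (F x)) {z : ι → 𝓞 K}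
    (hz : φ₁ (F (conjPair τ z)) < c) {i : ι} (hi : IsProperVar S i) : z i = 0 := by
  by_contra hne
  have hnorm := one_le_abs_mul_abs hdeg hφ hne
  have hfalse := hbound (conjPair τ z) _ hi.1
  have htrue := hbound (conjPair τ z) _ hi.2
  simp only [conjPair, hτ, Bool.false_eq_true, if_true, if_false] at hfalse htrue
  have hsq : 1 ≤ φ₁ (z i : K) ^ 2 ∨ 1 ≤ φ₂ (z i : K) ^ 2 := by
    simp only [one_le_sq_iff_one_le_abs]
    by_contra! h
    exact hnorm.not_gt (mul_lt_one_of_nonneg_of_lt_one_left (abs_nonneg _) h.1 h.2.le)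
  rcases hsq with h | h <;> nlinarith

theorem exists_conjPair_eq_mul {τ : K ≃ₐ[ℚ] K} {S : Set (ι × Bool)} {z : ι → 𝓞 K}
    (hz : ∀ i, IsProperVar S i → z i = 0) (u : 𝓞 K) :
    ∃ w : ι → 𝓞 K, (∀ i, IsProperVar S i → w i = 0) ∧
      ∀ p ∈ S, conjPair τ w p = u * conjPair τ z p := by
  classical
  let τ' := RingOfIntegers.mapRingEquiv (τ.symm : K ≃+* K)
  refine ⟨fun i => (if (i, false) ∈ S then u else τ' u) * z i,
    fun i hi => by simp [hz i hi], ?_⟩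
  rintro ⟨i, _ | _⟩ hp
  · simp [conjPair, hp]
  · by_cases hf : (i, false) ∈ S
    · simp [conjPair, hz i ⟨hf, hp⟩]
    · simp [conjPair, hf, τ']

end GeneralizedForm

theorem genform_universal_has_universal_quadratic_subform_general
    (K : Type*) [Field K] [NumberField K]
    (hdeg : Module.finrank ℚ K = 2)
    (φ₁ φ₂ : K →+* ℝ) (hφ : φ₁ ≠ φ₂)
    (τ : K ≃ₐ[ℚ] K) (hτ : τ ≠ AlgEquiv.refl)
    (r : ℕ) (G₀ : QuadraticForm K ((Fin r × Bool) → K))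
    (S : Set (Fin r × Bool))
    (hS : ∀ x y : (Fin r × Bool) → K, (∀ p ∈ S, x p = y p) → G₀ x = G₀ y)
    (hdef : ∀ x : (Fin r × Bool) → K, (∀ p ∉ S, x p = 0) → x ≠ 0 →
      0 < φ₁ (G₀ x) ∧ 0 < φ₂ (G₀ x))
    (huniv : ∀ α : 𝓞 K, 0 < φ₁ (α : K) → 0 < φ₂ (α : K) →
      ∃ z : Fin r → 𝓞 K,
        G₀ (fun p => if p.2 then τ (z p.1 : K) else (z p.1 : K)) = (α : K)) :
    ∀ α : 𝓞 K, 0 < φ₁ (α : K) → 0 < φ₂ (α : K) →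
      ∃ z : Fin r → 𝓞 K,
        (∀ i : Fin r, ((i, false) ∈ S ∧ (i, true) ∈ S) → z i = 0) ∧
        G₀ (fun p => if p.2 then τ (z p.1 : K) else (z p.1 : K)) = (α : K) := by
  intro α hα₁ hα₂
  obtain ⟨c, hc, hbound⟩ := QuadraticForm.exists_pos_mul_sq_le_of_forall_mem_eq φ₁ G₀ S hS
    fun x hx hx₀ => (hdef x hx hx₀).1
  obtain ⟨v, hv⟩ := exists_unit_mul_sq_lt hφ (φ₁ α) hc
  have hv₂ : ∀ φ : K →+* ℝ, 0 < φ ((v : 𝓞 K) : K) ^ 2 := fun φ => sq_pos_of_ne_zero (by simp)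
  obtain ⟨z, hz⟩ := huniv (α * v ^ 2) (by simpa using mul_pos hα₁ (hv₂ φ₁))
    (by simpa using mul_pos hα₂ (hv₂ φ₂))
  change G₀ (conjPair τ z) = ((α * v ^ 2 : 𝓞 K) : K) at hz
  have hz₀ : ∀ i, IsProperVar S i → z i = 0 := fun i =>
    eq_zero_of_isProperVar_of_lt hdeg hφ (apply_algEquiv_eq_of_ne_refl hdeg hφ hτ) hc hbound
      (F := G₀) (by rw [hz]; simpa using hv)
  obtain ⟨w, hw₀, hw⟩ := exists_conjPair_eq_mul (τ := τ) hz₀ (v⁻¹ : (𝓞 K)ˣ)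
  refine ⟨w, hw₀, ?_⟩
  change G₀ (conjPair τ w) = α
  calc G₀ (conjPair τ w) = G₀ ((((v⁻¹ : (𝓞 K)ˣ) : 𝓞 K) : K) • conjPair τ z) := hS _ _ hw
    _ = α := by
        have hinv : (((v⁻¹ : (𝓞 K)ˣ) : 𝓞 K) : K) = ((v : 𝓞 K) : K)⁻¹ :=
          map_units_inv (algebraMap (𝓞 K) K) v
        rw [QuadraticMap.map_smul, hz, smul_eq_mul, hinv]
        push_cast
        field_simp

/-- **Main Theorem (Theorem 3.4).** Let `K` be a real quadratic field (a totally real number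
field of degree 2, presented via its two distinct real embeddings `φ₁ φ₂ : K →+* ℝ`) with
nontrivial automorphism `τ`.  A generalized quadratic form in `r` variables is given by a
quadratic form `G₀` in `2r` variables (indexed by `Fin r × Bool`, where `(i, false)` receives
`zᵢ` and `(i, true)` receives `τ(zᵢ)`), via `G(z₁,…,z_r) = G₀(z₁, τ(z₁), …, z_r, τ(z_r))`.
The set `S` of coordinates appearing in `G` is encoded by requiring that `G₀` depend only on
the coordinates in `S` (`hS`); a variable `zᵢ` is proper if both `(i, false)` and `(i, true)`
lie in `S`.  `G` is integral (`hint`: it takes integral values on integral arguments, which for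
a quadratic form is equivalent to integrality of its coefficients) and totally positive
definite, meaning its associated quadratic form (the restriction of `G₀` to the coordinates in
`S`) is totally positive definite (`hdef`).  If `G` is universal, i.e. represents every totally
positive element of `𝓞 K` (`huniv`), then the quadratic subform of `G` obtained by setting all
proper variables to zero is universal: every totally positive `α ∈ 𝓞 K` is represented by `G`
with all proper variables put to `0`. -/
theorem genform_universal_has_universal_quadratic_subform
    (K : Type*) [Field K] [NumberField K]
    (hdeg : Module.finrank ℚ K = 2)
    (φ₁ φ₂ : K →+* ℝ) (hφ : φ₁ ≠ φ₂)
    (τ : K ≃ₐ[ℚ] K) (hτ : τ ≠ AlgEquiv.refl)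
    (r : ℕ) (G₀ : QuadraticForm K ((Fin r × Bool) → K))
    (hint : ∀ v : (Fin r × Bool) → 𝓞 K, IsIntegral ℤ (G₀ (fun p => (v p : K))))
    (S : Set (Fin r × Bool))
    (hS : ∀ x y : (Fin r × Bool) → K, (∀ p ∈ S, x p = y p) → G₀ x = G₀ y)
    (hdef : ∀ x : (Fin r × Bool) → K, (∀ p ∉ S, x p = 0) → x ≠ 0 →
      0 < φ₁ (G₀ x) ∧ 0 < φ₂ (G₀ x))
    (huniv : ∀ α : 𝓞 K, 0 < φ₁ (α : K) → 0 < φ₂ (α : K) →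
      ∃ z : Fin r → 𝓞 K,
        G₀ (fun p => if p.2 then τ (z p.1 : K) else (z p.1 : K)) = (α : K)) :
    ∀ α : 𝓞 K, 0 < φ₁ (α : K) → 0 < φ₂ (α : K) →
      ∃ z : Fin r → 𝓞 K,
        (∀ i : Fin r, ((i, false) ∈ S ∧ (i, true) ∈ S) → z i = 0) ∧
        G₀ (fun p => if p.2 then τ (z p.1 : K) else (z p.1 : K)) = (α : K) :=
  genform_universal_has_universal_quadratic_subform_general K hdeg φ₁ φ₂ hφ τ hτ r G₀ S hS hdef
    huniv
end

section
/- Let ε = 3 + 2√2 ∈ ℤ[√2] and g(z) := (2z − τ(z))². For every natural number n there exists z ∈ ℤ[√2] such that g(z) = ε^{4n}, i.e., (2z − τ(z))² = (3 + 2√2)^{4n}. -/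
/-! Since `2(a + b√2) - (a - b√2) = a + 3b√2`, the values of `z ↦ 2z - τ(z)` are exactly the
elements whose `√2`-coordinate is divisible by `3`. These form a subring, which contains
`ε² = 17 + 12√2` and hence every `ε^(2n)`; squaring gives `ε^(4n)`. -/

namespace Zsqrtd

variable {d : ℤ}

def imDvdSubring (d m : ℤ) : Subring (ℤ√d) where
  carrier := {w | m ∣ w.im}
  mul_mem' {x y} hx hy := by
    simp only [Set.mem_ofPred_eq, im_mul] at *
    exact dvd_add (dvd_mul_of_dvd_right hy _) (dvd_mul_of_dvd_left hx _)
  one_mem' := by simp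
  add_mem' hx hy := by simpa using dvd_add hx hy
  zero_mem' := by simp
  neg_mem' hx := by simpa using hx

@[simp]
theorem mem_imDvdSubring {m : ℤ} {w : ℤ√d} : w ∈ imDvdSubring d m ↔ m ∣ w.im := Iff.rfl

theorem two_mul_sub_star (z : ℤ√d) : 2 * z - star z = ⟨z.re, 3 * z.im⟩ := by
  ext <;> simp <;> ring

theorem exists_two_mul_sub_star_eq_iff {w : ℤ√d} : (∃ z, 2 * z - star z = w) ↔ 3 ∣ w.im := by
  simp only [two_mul_sub_star]
  constructor
  · rintro ⟨z, rfl⟩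
    exact dvd_mul_right 3 z.im
  · rintro ⟨b, hb⟩
    exact ⟨⟨w.re, b⟩, by ext <;> simp [hb]⟩

end Zsqrtd

/-- **Section 4.** Let `ε = 3 + 2√2 ∈ ℤ[√2]` and `g(z) := (2z − τ(z))²` (where `τ = star` is
conjugation).  For every natural `n` there is `z ∈ ℤ[√2]` with `g(z) = ε^(4n)`, i.e.
`(2z − τ(z))² = (3 + 2√2)^(4n)`. -/
theorem g_represents_eps_fourth_powers (n : ℕ) :
    ∃ z : ℤ√2, (2 * z - star z) ^ 2 = (⟨3, 2⟩ : ℤ√2) ^ (4 * n) := by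
  have hsq : (⟨3, 2⟩ : ℤ√2) ^ 2 ∈ Zsqrtd.imDvdSubring 2 3 := by
    simp [sq, Zsqrtd.im_mul]
  obtain ⟨z, hz⟩ := Zsqrtd.exists_two_mul_sub_star_eq_iff.mpr (pow_mem hsq n)
  exact ⟨z, by rw [hz]; ring⟩
end
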